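/- Let C be a linear [n,k,d] rank-metric code over F_{q^m}, ℓ ≥ 1, and suppose E ∈ F_{q^m}^{ℓ×n} satisfies rank_{F_q}(E) = rank_{F_{q^m}}(E) = t ≤ d−2. Then the codeword C₀ of the homogeneous ℓ-interleaved code of C is uniquely determined by R = C₀ + E; i.e., if C₁, C₂ are interleaved codewords and E₁, E₂ are errors satisfying these conditions with C₁ + E₁ = C₂ + E₂, then C₁ = C₂ and E₁ = E₂. -/

import Mathlib

open Matrix

noncomputable def extV {K L : Type} [Field K] [Field L] [Algebra K L]
    {m n : ℕ} (γ : Module.Basis (Fin m) K L) (v : Fin n → L) : Matrix (Fin m) (Fin n) K :=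
  Matrix.of fun i j => γ.repr (v j) i

noncomputable def extM {K L : Type} [Field K] [Field L] [Algebra K L]
    {m n : ℕ} {ι : Type} (γ : Module.Basis (Fin m) K L) (E : Matrix ι (Fin n) L) :
    Matrix (ι × Fin m) (Fin n) K :=
  Matrix.of fun p j => γ.repr (E p.1 j) p.2

/-!
Let `Wᵢ ≤ K^n` be the `K`-row space of the expansion of `Eᵢ` (of dimension `tᵢ`) and `D` the
`L`-row space of `C₁ - C₂ = E₂ - E₁`, a subspace of `C`. The `L`-span `V` of `W₁ + W₂` contains `D`
and has dimension `s = dim_K (W₁ + W₂)`. Since `E₂` has equal ranks over `K` and `L`, its row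
space is the `L`-span of `W₂`, whence `V ≤ span_L W₁ + D` and `s ≤ t₁ + dim D`. The `L`-span of a
`K`-subspace `W' ≤ W₁ + W₂` of dimension `s + 1 - dim D` then meets `D` nontrivially, and every
vector in it has `K`-rank at most `dim W' ≤ t₁ + 1 < d`: a nonzero codeword of rank below `d`.
-/

open Module Set Submodule

namespace Submodule

variable {K V : Type*} [Field K] [AddCommGroup V] [Module K V]

lemma span_range_coe_finBasis (W : Submodule K V) [FiniteDimensional K W] :
    span K (range fun i => (finBasis K W i : V)) = W := by
  have h := congrArg (map W.subtype) (finBasis K W).span_eq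
  rwa [map_span, map_subtype_top, ← range_comp] at h

variable (L : Type*) [Field L] [Algebra K L] {ι : Type*}

/-- The base change `L ⊗[K] W`, realised as a subspace of `L^ι`. -/
def piBaseChange (W : Submodule K (ι → K)) : Submodule L (ι → L) :=
  span L (Pi.algebraMap ι K L '' W)

variable {L}

lemma piBaseChange_span (s : Set (ι → K)) :
    (span K s).piBaseChange L = span L (Pi.algebraMap ι K L '' s) := by
  rw [piBaseChange, ← map_coe, map_span, span_span_of_tower]

lemma piBaseChange_mono {W₁ W₂ : Submodule K (ι → K)} (h : W₁ ≤ W₂) :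
    W₁.piBaseChange L ≤ W₂.piBaseChange L :=
  span_mono (image_mono h)

lemma piBaseChange_sup (W₁ W₂ : Submodule K (ι → K)) :
    (W₁ ⊔ W₂).piBaseChange L = W₁.piBaseChange L ⊔ W₂.piBaseChange L := by
  conv_lhs => rw [← span_eq W₁, ← span_eq W₂, ← span_union, piBaseChange_span]
  rw [image_union, span_union, piBaseChange, piBaseChange]

variable [Finite ι]

lemma piBaseChange_eq_span_finBasis (W : Submodule K (ι → K)) :
    W.piBaseChange L =
      span L (range fun i => Pi.algebraMap ι K L (finBasis K W i)) := by
  conv_lhs => rw [← span_range_coe_finBasis W]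
  rw [piBaseChange_span, ← range_comp]
  rfl

lemma finrank_piBaseChange (W : Submodule K (ι → K)) :
    finrank L (W.piBaseChange L) = finrank K W := by
  have hli : LinearIndependent K fun i => (finBasis K W i : ι → K) :=
    (finBasis K W).linearIndependent.map' W.subtype W.ker_subtype
  have hliL : LinearIndependent L fun i => Pi.algebraMap ι K L (finBasis K W i) :=
    linearIndependent_algebraMap_comp_iff.mpr hli
  rw [piBaseChange_eq_span_finBasis, finrank_span_eq_card hliL, Fintype.card_fin]

lemma finrank_span_range_le_of_mem_piBaseChange {W : Submodule K (ι → K)} {x : ι → L}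
    (hx : x ∈ W.piBaseChange L) : finrank K (span K (range x)) ≤ finrank K W := by
  rw [piBaseChange_eq_span_finBasis, mem_span_range_iff_exists_fun] at hx
  obtain ⟨c, rfl⟩ := hx
  have hentry : ∀ j, (∑ i, c i • Pi.algebraMap ι K L (finBasis K W i)) j ∈ span K (range c) := by
    intro j
    simp only [Finset.sum_apply, Pi.smul_apply, smul_eq_mul]
    refine sum_mem fun i _ => ?_
    have := smul_mem (span K (range c)) ((finBasis K W i : ι → K) j)
      (subset_span (mem_range_self i))
    rwa [Algebra.smul_def, mul_comm] at this
  have := FiniteDimensional.span_of_finite K (finite_range c)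
  calc finrank K (span K (range _)) ≤ finrank K (span K (range c)) :=
        finrank_mono (span_le.mpr (range_subset_iff.mpr hentry))
    _ ≤ finrank K W := (finrank_range_le_card c).trans_eq (Fintype.card_fin _)

theorem exists_ne_zero_finrank_span_range_add_finrank_le {W : Submodule K (ι → K)}
    {D : Submodule L (ι → L)} (hDW : D ≤ W.piBaseChange L) (hD : D ≠ ⊥) :
    ∃ x ∈ D, x ≠ 0 ∧ finrank K (span K (range x)) + finrank L D ≤ finrank K W + 1 := by
  have hr : 1 ≤ finrank L D := one_le_finrank_iff.mpr hD
  have hrW : finrank L D ≤ finrank K W := finrank_piBaseChange (L := L) W ▸ finrank_mono hDW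
  obtain ⟨f, hf⟩ :=
    exists_linearIndependent_of_le_finrank (R := K) (M := W)
      (n := finrank K W + 1 - finrank L D) (by omega)
  set W' := span K (range fun i => (f i : ι → K))
  have hW'W : W' ≤ W := span_le.mpr (range_subset_iff.mpr fun i => (f i).2)
  have hW' : finrank K W' = finrank K W + 1 - finrank L D :=
    (finrank_span_eq_card (hf.map' W.subtype W.ker_subtype)).trans (Fintype.card_fin _)
  -- Inside `W.piBaseChange L`, the dimensions of `D` and `W'.piBaseChange L` add up to one more.
  have hmeet : D ⊓ W'.piBaseChange L ≠ ⊥ := by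
    rw [← one_le_finrank_iff]
    have hsum := finrank_sup_add_finrank_inf_eq D (W'.piBaseChange L)
    have hsup := finrank_mono (sup_le hDW (piBaseChange_mono hW'W))
    rw [finrank_piBaseChange] at hsum hsup
    omega
  obtain ⟨x, ⟨hxD, hxW'⟩, hx0⟩ := (Submodule.ne_bot_iff _).mp hmeet
  have := finrank_span_range_le_of_mem_piBaseChange hxW'
  exact ⟨x, hxD, hx0, by omega⟩

end Submodule

section Expansion

variable {K L : Type} [Field K] [Field L] [Algebra K L] {m n : ℕ} (γ : Basis (Fin m) K L)

lemma rank_extV (v : Fin n → L) :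
    (extV γ v).rank = finrank K (span K (range v)) := by
  rw [← rank_transpose, rank_eq_finrank_span_row]
  have h : range (extV γ v)ᵀ.row = γ.equivFun '' range v := by
    rw [← range_comp]; rfl
  rw [h, ← LinearEquiv.coe_toLinearMap, ← map_span, LinearEquiv.finrank_map_eq]

lemma rank_extV_pos {v : Fin n → L} (hv : v ≠ 0) : 0 < (extV γ v).rank := by
  have := FiniteDimensional.span_of_finite K (finite_range v)
  rw [rank_extV]
  exact one_le_finrank_iff.mpr fun h => hv (funext fun j => span_eq_bot.mp h _ ⟨j, rfl⟩)

lemma span_range_le_piBaseChange_extM {ι : Type} (E : Matrix ι (Fin n) L) :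
    span L (range E) ≤ (span K (range (extM γ E))).piBaseChange L := by
  rw [piBaseChange_span, span_le]
  rintro _ ⟨i, rfl⟩
  have hrow : E i = ∑ p, γ p • Pi.algebraMap (Fin n) K L (extM γ E (i, p)) := by
    funext j
    conv_lhs => rw [← γ.sum_repr (E i j)]
    simp [extM, Pi.algebraMap, Algebra.smul_def, mul_comm]
  rw [hrow]
  exact sum_mem fun p _ => smul_mem _ _ (subset_span ⟨_, mem_range_self _, rfl⟩)

lemma span_range_eq_piBaseChange_extM {ι : Type} [Finite ι] (E : Matrix ι (Fin n) L)
    (hE : E.rank = (extM γ E).rank) :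
    span L (range E) = (span K (range (extM γ E))).piBaseChange L := by
  refine eq_of_le_of_finrank_le (span_range_le_piBaseChange_extM γ E) ?_
  rw [finrank_piBaseChange]
  exact ((rank_eq_finrank_span_row _).symm.trans hE.symm).trans_le
    (rank_eq_finrank_span_row E).le

theorem exists_ne_zero_mem_span_range_sub_rank_extV_le {ι : Type} [Finite ι]
    {E₁ E₂ : Matrix ι (Fin n) L} (hE₂ : E₂.rank = (extM γ E₂).rank) (hne : E₁ ≠ E₂) :
    ∃ x ∈ span L (range (E₂ - E₁)), x ≠ 0 ∧
      (extV γ x).rank ≤ (extM γ E₁).rank + 1 ∧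
      (extV γ x).rank ≤ (extM γ E₁).rank + (extM γ E₂).rank := by
  set W₁ := span K (range (extM γ E₁))
  set W₂ := span K (range (extM γ E₂))
  set D := span L (range (E₂ - E₁))
  have hE₁W₁ := span_range_le_piBaseChange_extM γ E₁
  have hE₂W₂ := span_range_eq_piBaseChange_extM γ E₂ hE₂
  have hDW : D ≤ (W₁ ⊔ W₂).piBaseChange L := by
    rw [piBaseChange_sup, span_le]
    rintro _ ⟨i, rfl⟩
    exact sub_mem (mem_sup_right (hE₂W₂ ▸ subset_span ⟨i, rfl⟩))
      (mem_sup_left (hE₁W₁ (subset_span ⟨i, rfl⟩)))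
  have hW₂D : W₂.piBaseChange L ≤ W₁.piBaseChange L ⊔ D := by
    rw [← hE₂W₂, span_le]
    rintro _ ⟨i, rfl⟩
    rw [show E₂ i = E₁ i + (E₂ - E₁) i from (add_sub_cancel (E₁ i) (E₂ i)).symm]
    exact add_mem (mem_sup_left (hE₁W₁ (subset_span ⟨i, rfl⟩)))
      (mem_sup_right (subset_span ⟨i, rfl⟩))
  have hD : D ≠ ⊥ := by
    refine fun h => hne (sub_eq_zero.mp ?_).symm
    exact funext fun i => (span_eq_bot.mp h) _ ⟨i, rfl⟩
  have hVW₁D : (W₁ ⊔ W₂).piBaseChange L ≤ W₁.piBaseChange L ⊔ D := by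
    rw [piBaseChange_sup]
    exact sup_le le_sup_left hW₂D
  have hDW₁ : finrank K ↥(W₁ ⊔ W₂) ≤ finrank K W₁ + finrank L D := by
    calc finrank K ↥(W₁ ⊔ W₂) = finrank L ((W₁ ⊔ W₂).piBaseChange L) :=
          (finrank_piBaseChange (L := L) _).symm
      _ ≤ finrank L ↥(W₁.piBaseChange L ⊔ D) := Submodule.finrank_mono hVW₁D
      _ ≤ finrank L (W₁.piBaseChange L) + finrank L D := finrank_add_le_finrank_add_finrank _ _
      _ = finrank K W₁ + finrank L D := by rw [finrank_piBaseChange]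
  have hW₁W₂ := finrank_add_le_finrank_add_finrank W₁ W₂
  have hrD : 1 ≤ finrank L D := one_le_finrank_iff.mpr hD
  obtain ⟨x, hxD, hx0, hx⟩ := exists_ne_zero_finrank_span_range_add_finrank_le hDW hD
  refine ⟨x, hxD, hx0, ?_⟩
  have ht₁ : (extM γ E₁).rank = finrank K W₁ := rank_eq_finrank_span_row _
  have ht₂ : (extM γ E₂).rank = finrank K W₂ := rank_eq_finrank_span_row _
  rw [rank_extV, ht₁, ht₂]
  exact ⟨by omega, by omega⟩

end Expansion

theorem interleaved_unique_decoding_general {m n d ℓ : ℕ} (K L : Type) [Field K]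
    [Field L] [Algebra K L]
    (γ : Module.Basis (Fin m) K L)
    (C : Submodule L (Fin n → L))
    (hd : ∀ v ∈ C, v ≠ 0 → d ≤ (extV γ v).rank)
    (C₁ C₂ E₁ E₂ : Matrix (Fin ℓ) (Fin n) L)
    (hC₁ : ∀ i, C₁ i ∈ C) (hC₂ : ∀ i, C₂ i ∈ C)
    (hE₁t : (extM γ E₁).rank ≤ d - 2)
    (hE₂full : E₂.rank = (extM γ E₂).rank) (hE₂t : (extM γ E₂).rank ≤ d - 2)
    (hR : C₁ + E₁ = C₂ + E₂) :
    C₁ = C₂ ∧ E₁ = E₂ := by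
  have hC : C₁ = C₂ := by
    by_contra hne
    have hE : E₂ - E₁ = C₁ - C₂ := by
      rw [sub_eq_sub_iff_add_eq_add, hR, add_comm]
    have hEne : E₁ ≠ E₂ := fun h => hne (add_right_cancel (h ▸ hR))
    obtain ⟨x, hxD, hx0, hx₁, hx₂⟩ :=
      exists_ne_zero_mem_span_range_sub_rank_extV_le γ hE₂full hEne
    have hxC : x ∈ C := by
      rw [hE] at hxD
      exact span_le.mpr (range_subset_iff.mpr fun i => sub_mem (hC₁ i) (hC₂ i)) hxD
    have hdx := hd x hxC hx0
    have hx := rank_extV_pos γ hx0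
    -- `hx₂` settles `d ≤ 1`, where `d - 2` truncates to `0`.
    omega
  exact ⟨hC, add_left_cancel (hC ▸ hR)⟩

/-- unique decoding of high-order interleaved codes: let `C` be a linear
`[n,k,d]` rank-metric code over `F_{q^m}` with minimum rank distance `d`. If interleaved
codewords `C₁, C₂` (all rows in `C`) and errors `E₁, E₂`, each satisfying
`rank_{F_q}(Eᵢ) = rank_{F_{q^m}}(Eᵢ) ≤ d - 2`, give the same received word
`C₁ + E₁ = C₂ + E₂`, then `C₁ = C₂` and `E₁ = E₂`. -/
theorem interleaved_unique_decoding {q m n k d ℓ : ℕ} (K L : Type) [Field K] [Fintype K]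
    [Field L] [Fintype L] [Algebra K L] (hK : Fintype.card K = q) (hL : Fintype.card L = q ^ m)
    (γ : Module.Basis (Fin m) K L)
    (C : Submodule L (Fin n → L)) (hk : Module.finrank L C = k)
    (hd : ∀ v ∈ C, v ≠ 0 → d ≤ (extV γ v).rank)
    (hd' : ∃ v ∈ C, v ≠ 0 ∧ (extV γ v).rank = d)
    (C₁ C₂ E₁ E₂ : Matrix (Fin ℓ) (Fin n) L)
    (hC₁ : ∀ i, C₁ i ∈ C) (hC₂ : ∀ i, C₂ i ∈ C)
    (hE₁full : E₁.rank = (extM γ E₁).rank) (hE₁t : (extM γ E₁).rank ≤ d - 2)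
    (hE₂full : E₂.rank = (extM γ E₂).rank) (hE₂t : (extM γ E₂).rank ≤ d - 2)
    (hR : C₁ + E₁ = C₂ + E₂) :
    C₁ = C₂ ∧ E₁ = E₂ :=
  interleaved_unique_decoding_general K L γ C hd C₁ C₂ E₁ E₂ hC₁ hC₂ hE₁t hE₂full hE₂t hR
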